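/- arXiv:1203.0911 — 7 statements merged into one kernel-verified Lean document; each statement's English description precedes it below -/
import Mathlib

section
/- Let φ₁, φ₂, φ₃ be real numbers and let Ψ be the 3×3 real matrix with rows (0, cos φ₁, sin φ₁), (sin φ₂, 0, cos φ₂), (cos φ₃, sin φ₃, 0). Then for every x ∈ ℝ³, ‖Ψ x‖ ≤ √2 · ‖x‖, i.e. the ℓ²-operator norm of Ψ is at most √2. -/
open Matrix

/-- the ℓ²-operator norm of the matrix Ψ with rows (0, cos φ₁, sin φ₁),
(sin φ₂, 0, cos φ₂), (cos φ₃, sin φ₃, 0) is at most √2: ‖Ψ x‖ ≤ √2 ‖x‖ for all x ∈ ℝ³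
(Euclidean norms). -/
theorem stmt6 (φ₁ φ₂ φ₃ : ℝ)
    (Ψ : Matrix (Fin 3) (Fin 3) ℝ)
    (hΨ : Ψ = !![0, Real.cos φ₁, Real.sin φ₁;
                 Real.sin φ₂, 0, Real.cos φ₂;
                 Real.cos φ₃, Real.sin φ₃, 0]) :
    ∀ x : Fin 3 → ℝ,
      Real.sqrt (∑ i, (Ψ.mulVec x i) ^ 2) ≤ Real.sqrt 2 * Real.sqrt (∑ i, (x i) ^ 2) := by
  intro x
  have key : (∑ i, (Ψ.mulVec x i) ^ 2) ≤ 2 * ∑ i, (x i) ^ 2 := by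
    subst hΨ
    simp [Fin.sum_univ_three, Matrix.mulVec, dotProduct, Fin.sum_univ_three]
    have h1 := Real.sin_sq_add_cos_sq φ₁
    have h2 := Real.sin_sq_add_cos_sq φ₂
    have h3 := Real.sin_sq_add_cos_sq φ₃
    nlinarith [sq_nonneg (Real.cos φ₁ * x 2 - Real.sin φ₁ * x 1),
      sq_nonneg (Real.sin φ₂ * x 2 - Real.cos φ₂ * x 0),
      sq_nonneg (Real.cos φ₃ * x 1 - Real.sin φ₃ * x 0),
      sq_nonneg (x 0), sq_nonneg (x 1), sq_nonneg (x 2)]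
  calc Real.sqrt (∑ i, (Ψ.mulVec x i) ^ 2) ≤ Real.sqrt (2 * ∑ i, (x i) ^ 2) :=
        Real.sqrt_le_sqrt key
    _ = Real.sqrt 2 * Real.sqrt (∑ i, (x i) ^ 2) := Real.sqrt_mul (by norm_num) _
end

section
/- Let ε ∈ [0, π/2], let e₁, e₂, e₃ be the standard basis of ℝ³, and let n̂₁, n̂₂, n̂₃ ∈ ℝ³ be unit vectors with n̂ₖ · eₖ ≥ cos ε for k = 1,2,3. Let Φ be the 3×3 real matrix whose k-th row is n̂ₖ. Then for every t ∈ ℝ³, ‖Φ t − t‖ ≤ λ(ε)·‖t‖, where λ(ε) = 1 − cos ε + √2·sin ε. -/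
open Matrix

/-!
Split `Φ t - t` into its diagonal part `((Φₖₖ - 1) tₖ)ₖ` and its off-diagonal part
`(∑_{i ≠ k} Φₖᵢ tᵢ)ₖ`. Since `cos ε ≤ Φₖₖ ≤ 1`, the diagonal part has norm at most
`(1 - cos ε) ‖t‖`. Each row has off-diagonal mass `∑_{i ≠ k} Φₖᵢ² = 1 - Φₖₖ² ≤ sin² ε`, so by
Cauchy–Schwarz the `k`-th off-diagonal entry is at most `sin² ε (‖t‖² - tₖ²)` in square; summing
over `k` gives `(d - 1) sin² ε ‖t‖²` in dimension `d`, i.e. `2 sin² ε ‖t‖²` in ℝ³.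
-/

open Finset

section EuclideanNormBounds

variable {ι : Type*} [Fintype ι]

theorem sqrt_sum_sq_add_le (x y : ι → ℝ) :
    √(∑ i, (x i + y i) ^ 2) ≤ √(∑ i, x i ^ 2) + √(∑ i, y i ^ 2) := by
  have hnorm : ∀ z : ι → ℝ, ‖(WithLp.toLp 2 z : EuclideanSpace ℝ ι)‖ = √(∑ i, z i ^ 2) := by
    intro z
    simp only [EuclideanSpace.norm_eq, Real.norm_eq_abs, sq_abs]
  rw [← hnorm, ← hnorm, ← hnorm]
  exact norm_add_le (WithLp.toLp 2 x) (WithLp.toLp 2 y)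

theorem sqrt_sum_sq_le_mul_sqrt_of_sum_sq_le {x t : ι → ℝ} {a : ℝ} (ha : 0 ≤ a)
    (h : ∑ i, x i ^ 2 ≤ a ^ 2 * ∑ i, t i ^ 2) : √(∑ i, x i ^ 2) ≤ a * √(∑ i, t i ^ 2) := by
  rw [Real.sqrt_le_left (by positivity), mul_pow, Real.sq_sqrt (by positivity)]
  exact h

theorem sum_sq_mul_le {d : ι → ℝ} {a : ℝ} (hd : ∀ k, d k ^ 2 ≤ a ^ 2) (t : ι → ℝ) :
    ∑ k, (d k * t k) ^ 2 ≤ a ^ 2 * ∑ k, t k ^ 2 := by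
  rw [mul_sum]
  gcongr with k
  rw [mul_pow]
  exact mul_le_mul_of_nonneg_right (hd k) (sq_nonneg _)

variable [DecidableEq ι]

theorem sum_sum_erase_sq (t : ι → ℝ) :
    ∑ k, ∑ i ∈ univ.erase k, t i ^ 2 = (Fintype.card ι - 1) * ∑ i, t i ^ 2 := by
  simp only [sum_erase_eq_sub (mem_univ _), sum_sub_distrib, sum_const, card_univ, nsmul_eq_mul]
  ring

theorem sum_sq_offDiag_mulVec_le {A : ι → ι → ℝ} {b : ℝ}
    (hA : ∀ k, ∑ i ∈ univ.erase k, A k i ^ 2 ≤ b ^ 2) (t : ι → ℝ) :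
    ∑ k, (∑ i ∈ univ.erase k, A k i * t i) ^ 2
      ≤ (Fintype.card ι - 1) * b ^ 2 * ∑ i, t i ^ 2 := by
  calc ∑ k, (∑ i ∈ univ.erase k, A k i * t i) ^ 2
      ≤ ∑ k, b ^ 2 * ∑ i ∈ univ.erase k, t i ^ 2 := by
        gcongr with k
        exact (sum_mul_sq_le_sq_mul_sq _ _ _).trans
          (mul_le_mul_of_nonneg_right (hA k) (sum_nonneg fun _ _ => sq_nonneg _))
    _ = (Fintype.card ι - 1) * b ^ 2 * ∑ i, t i ^ 2 := by
        rw [← mul_sum, sum_sum_erase_sq]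
        ring

end EuclideanNormBounds

section UnitVectors

variable {ι : Type*} [Fintype ι] {x : ι → ℝ} {k : ι} {c : ℝ}

theorem apply_le_one_of_sum_sq_eq_one (hx : ∑ i, x i ^ 2 = 1) (k : ι) : x k ≤ 1 := by
  have : x k ^ 2 ≤ 1 := hx ▸ single_le_sum (fun i _ => sq_nonneg (x i)) (mem_univ k)
  nlinarith

theorem sq_apply_sub_one_le (hx : ∑ i, x i ^ 2 = 1) (hk : c ≤ x k) :
    (x k - 1) ^ 2 ≤ (1 - c) ^ 2 := by
  have := apply_le_one_of_sum_sq_eq_one hx k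
  nlinarith

theorem sum_erase_sq_le [DecidableEq ι] (hx : ∑ i, x i ^ 2 = 1) (hc : 0 ≤ c) (hk : c ≤ x k) :
    ∑ i ∈ univ.erase k, x i ^ 2 ≤ 1 - c ^ 2 := by
  rw [sum_erase_eq_sub (mem_univ k), hx]
  nlinarith

end UnitVectors

theorem mulVec_sub_self_apply {ι : Type*} [Fintype ι] [DecidableEq ι] (A : Matrix ι ι ℝ)
    (t : ι → ℝ) (k : ι) :
    (A *ᵥ t) k - t k = (A k k - 1) * t k + ∑ i ∈ univ.erase k, A k i * t i := by
  rw [mulVec, dotProduct, ← add_sum_erase _ _ (mem_univ k)]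
  ring

theorem sqrt_sum_sq_mulVec_sub_self_le {ι : Type*} [Fintype ι] [DecidableEq ι]
    (A : Matrix ι ι ℝ) {c : ℝ} (hc : c ∈ Set.Icc 0 1) (hunit : ∀ k, ∑ i, A k i ^ 2 = 1)
    (hdiag : ∀ k, c ≤ A k k) (t : ι → ℝ) :
    √(∑ k, ((A *ᵥ t) k - t k) ^ 2)
      ≤ (1 - c + √(Fintype.card ι - 1) * √(1 - c ^ 2)) * √(∑ k, t k ^ 2) := by
  obtain ⟨hc0, hc1⟩ := hc
  have hdiagPart : √(∑ k, ((A k k - 1) * t k) ^ 2) ≤ (1 - c) * √(∑ k, t k ^ 2) :=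
    sqrt_sum_sq_le_mul_sqrt_of_sum_sq_le (by linarith)
      (sum_sq_mul_le (fun k => sq_apply_sub_one_le (hunit k) (hdiag k)) t)
  have hoffPart : √(∑ k, (∑ i ∈ univ.erase k, A k i * t i) ^ 2)
      ≤ √(Fintype.card ι - 1) * √(1 - c ^ 2) * √(∑ k, t k ^ 2) := by
    refine sqrt_sum_sq_le_mul_sqrt_of_sum_sq_le (by positivity) ?_
    calc _ ≤ (Fintype.card ι - 1) * √(1 - c ^ 2) ^ 2 * ∑ k, t k ^ 2 :=
          sum_sq_offDiag_mulVec_le (fun k => ?_) t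
      _ ≤ _ := by
        -- `sq_sqrt'` rather than `sq_sqrt`: for empty `ι` the radicand `card ι - 1` is `-1`.
        rw [mul_pow, Real.sq_sqrt' (x := (Fintype.card ι : ℝ) - 1)]
        gcongr
        exact le_max_left _ _
    rw [Real.sq_sqrt (by nlinarith)]
    exact sum_erase_sq_le (hunit k) hc0 (hdiag k)
  simp only [mulVec_sub_self_apply]
  calc _ ≤ _ := sqrt_sum_sq_add_le _ _
    _ ≤ _ := add_le_add hdiagPart hoffPart
    _ = _ := by ring

/-- if the unit vectors n̂ₖ (rows of Φ) each satisfy n̂ₖ·eₖ ≥ cos ε, then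
for all t ∈ ℝ³, ‖Φt − t‖ ≤ (1 − cos ε + √2 sin ε)‖t‖ (Euclidean norms). -/
theorem stmt7 (ε : ℝ) (hε : ε ∈ Set.Icc 0 (Real.pi / 2))
    (n : Fin 3 → Fin 3 → ℝ)
    (hunit : ∀ k, Real.sqrt (∑ i, (n k i) ^ 2) = 1)
    (hclose : ∀ k, n k ⬝ᵥ Pi.single k 1 ≥ Real.cos ε)
    (Φ : Matrix (Fin 3) (Fin 3) ℝ) (hΦ : Φ = Matrix.of n) :
    ∀ t : Fin 3 → ℝ,
      Real.sqrt (∑ i, (Φ.mulVec t i - t i) ^ 2)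
        ≤ (1 - Real.cos ε + Real.sqrt 2 * Real.sin ε) * Real.sqrt (∑ i, (t i) ^ 2) := by
  intro t
  rw [hΦ]
  obtain ⟨hε0, hεπ⟩ := hε
  have hsin : Real.sin ε = √(1 - Real.cos ε ^ 2) :=
    Real.sin_eq_sqrt_one_sub_cos_sq hε0 (by linarith [Real.pi_pos])
  have hdim : √((Fintype.card (Fin 3) : ℝ) - 1) = √2 := by norm_num
  rw [hsin, ← hdim]
  exact sqrt_sum_sq_mulVec_sub_self_le (Matrix.of n)
    ⟨Real.cos_nonneg_of_mem_Icc ⟨by linarith [Real.pi_pos], hεπ⟩, Real.cos_le_one ε⟩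
    (fun k => Real.sqrt_eq_one.mp (hunit k))
    (fun k => by simpa only [dotProduct_single_one, of_apply] using hclose k) t
end

section
/- Let λ ∈ [0,1] and let t, c ∈ ℝ³ satisfy ‖t‖ ≤ 1, ‖c‖ ≤ 1 and ‖c − t‖ ≤ λ·‖t‖. Then (1/2)·(1 + t·c + √((1 − ‖t‖²)·(1 − ‖c‖²))) ≥ 1 − λ/2. -/
open Matrix

private lemma stmt8_key (T C d a b : ℝ) (hT0 : 0 ≤ T) (hC0 : 0 ≤ C) (hd0 : 0 ≤ d)
    (hT1 : T ≤ 1) (hC1 : C ≤ 1) (hd1 : d ≤ 1)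
    (htri1 : C ≤ T + d) (htri2 : T ≤ C + d)
    (ha0 : 0 ≤ a) (hb0 : 0 ≤ b)
    (hasq : a ^ 2 = 1 - T ^ 2) (hbsq : b ^ 2 = 1 - C ^ 2) :
    (a - b) ^ 2 ≤ 2 * d - d ^ 2 := by
  rcases le_or_gt (C + T) (2 - d) with hcase | hcase
  · rcases le_total a b with hle | hle
    · nlinarith [mul_nonneg (sub_nonneg.2 hle) (add_nonneg ha0 hb0)]
    · nlinarith [mul_nonneg (sub_nonneg.2 hle) (add_nonneg ha0 hb0)]
  · have hTge : 1 - d ≤ T := by linarith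
    have hCge : 1 - d ≤ C := by linarith
    have ha2 : a ^ 2 ≤ 2 * d - d ^ 2 := by nlinarith
    have hb2 : b ^ 2 ≤ 2 * d - d ^ 2 := by nlinarith
    rcases le_total a b with hle | hle
    · nlinarith [mul_nonneg ha0 (sub_nonneg.2 hle)]
    · nlinarith [mul_nonneg hb0 (sub_nonneg.2 hle)]

private lemma stmt8_final (lam T C d a b : ℝ) (hlam0 : 0 ≤ lam)
    (hd0 : 0 ≤ d) (hdlam : d ≤ lam)
    (hkey : (a - b) ^ 2 ≤ 2 * d - d ^ 2)
    (hasq : a ^ 2 = 1 - T ^ 2) (hbsq : b ^ 2 = 1 - C ^ 2) :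
    (1 / 2) * (1 + (T ^ 2 + C ^ 2 - d ^ 2) / 2 + a * b) ≥ 1 - lam / 2 := by
  nlinarith

/-- if ‖t‖ ≤ 1, ‖c‖ ≤ 1 and ‖c − t‖ ≤ λ‖t‖ with λ ∈ [0,1], then the qubit
fidelity (1/2)(1 + t·c + √((1−‖t‖²)(1−‖c‖²))) is at least 1 − λ/2 (Euclidean norms on ℝ³). -/
theorem stmt8 (lam : ℝ) (hlam : lam ∈ Set.Icc (0 : ℝ) 1)
    (t c : Fin 3 → ℝ)
    (ht : Real.sqrt (∑ i, (t i) ^ 2) ≤ 1)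
    (hc : Real.sqrt (∑ i, (c i) ^ 2) ≤ 1)
    (hd : Real.sqrt (∑ i, (c i - t i) ^ 2) ≤ lam * Real.sqrt (∑ i, (t i) ^ 2)) :
    (1 / 2) * (1 + t ⬝ᵥ c + Real.sqrt ((1 - ∑ i, (t i) ^ 2) * (1 - ∑ i, (c i) ^ 2)))
      ≥ 1 - lam / 2 := by
  obtain ⟨hlam0, hlam1⟩ := hlam
  have hT2 : (0:ℝ) ≤ ∑ i, (t i) ^ 2 := Finset.sum_nonneg fun i _ => sq_nonneg _
  have hC2 : (0:ℝ) ≤ ∑ i, (c i) ^ 2 := Finset.sum_nonneg fun i _ => sq_nonneg _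
  have hD2 : (0:ℝ) ≤ ∑ i, (c i - t i) ^ 2 := Finset.sum_nonneg fun i _ => sq_nonneg _
  set T := Real.sqrt (∑ i, (t i) ^ 2) with hTdef
  set C := Real.sqrt (∑ i, (c i) ^ 2) with hCdef
  set d := Real.sqrt (∑ i, (c i - t i) ^ 2) with hddef
  have hT0 : 0 ≤ T := Real.sqrt_nonneg _
  have hC0 : 0 ≤ C := Real.sqrt_nonneg _
  have hd0 : 0 ≤ d := Real.sqrt_nonneg _
  have hTsq : T ^ 2 = ∑ i, (t i) ^ 2 := Real.sq_sqrt hT2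
  have hCsq : C ^ 2 = ∑ i, (c i) ^ 2 := Real.sq_sqrt hC2
  have hdsq : d ^ 2 = ∑ i, (c i - t i) ^ 2 := Real.sq_sqrt hD2
  -- dot product identity
  have hdot : t ⬝ᵥ c = (T ^ 2 + C ^ 2 - d ^ 2) / 2 := by
    rw [hTsq, hCsq, hdsq]
    simp only [dotProduct, Fin.sum_univ_three]
    ring
  -- Cauchy–Schwarz
  have hCS1 : ∑ i, t i * (c i - t i) ≤ T * d :=
    Real.sum_mul_le_sqrt_mul_sqrt _ _ _
  have hCS2 : ∑ i, c i * (t i - c i) ≤ C * d := by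
    have h := Real.sum_mul_le_sqrt_mul_sqrt Finset.univ c (fun i => t i - c i)
    have he : ∑ i, (t i - c i) ^ 2 = ∑ i, (c i - t i) ^ 2 := by
      simp only [Fin.sum_univ_three]; ring
    rwa [he] at h
  -- triangle inequalities
  have htri1 : C ≤ T + d := by
    have hC2' : C ^ 2 = T ^ 2 + 2 * (∑ i, t i * (c i - t i)) + d ^ 2 := by
      rw [hTsq, hCsq, hdsq]; simp only [Fin.sum_univ_three]; ring
    nlinarith
  have htri2 : T ≤ C + d := by
    have hT2' : T ^ 2 = C ^ 2 + 2 * (∑ i, c i * (t i - c i)) + d ^ 2 := by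
      rw [hTsq, hCsq, hdsq]; simp only [Fin.sum_univ_three]; ring
    nlinarith
  have hT1 : T ≤ 1 := ht
  have hC1 : C ≤ 1 := hc
  have hdlam : d ≤ lam * T := hd
  have hd1 : d ≤ 1 := le_trans hdlam (mul_le_one₀ hlam1 hT0 hT1)
  have hdlam' : d ≤ lam := le_trans hdlam (by
    calc lam * T ≤ lam * 1 := by exact mul_le_mul_of_nonneg_left hT1 hlam0
    _ = lam := mul_one lam)
  set a := Real.sqrt (1 - ∑ i, (t i) ^ 2) with hadef
  set b := Real.sqrt (1 - ∑ i, (c i) ^ 2) with hbdef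
  have hT21 : (∑ i, (t i) ^ 2) ≤ 1 := by rw [← hTsq]; exact pow_le_one₀ hT0 hT1
  have hC21 : (∑ i, (c i) ^ 2) ≤ 1 := by rw [← hCsq]; exact pow_le_one₀ hC0 hC1
  have ha0 : 0 ≤ a := Real.sqrt_nonneg _
  have hb0 : 0 ≤ b := Real.sqrt_nonneg _
  have hasq : a ^ 2 = 1 - T ^ 2 := by rw [hTsq]; exact Real.sq_sqrt (by linarith)
  have hbsq : b ^ 2 = 1 - C ^ 2 := by rw [hCsq]; exact Real.sq_sqrt (by linarith)
  have hab : Real.sqrt ((1 - ∑ i, (t i) ^ 2) * (1 - ∑ i, (c i) ^ 2)) = a * b :=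
    Real.sqrt_mul (by linarith) _
  have key := stmt8_key T C d a b hT0 hC0 hd0 hT1 hC1 hd1 htri1 htri2 ha0 hb0 hasq hbsq
  rw [hdot, hab]
  exact stmt8_final lam T C d a b hlam0 hd0 hdlam' key hasq hbsq
end

section
/- Let n̂₁, n̂₂, n̂₃ ∈ ℝ³ be unit vectors that are linearly independent, and let q_{a,k} > 0 be positive reals for a ∈ {+1,−1} and k ∈ {1,2,3}. Then the function g(r) = Σ_{k=1}^{3} Σ_{a=±1} q_{a,k} · log((1 + a·(n̂ₖ · r))/2) is strictly concave on the open unit ball {r ∈ ℝ³ : ‖r‖ < 1}. -/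
/-!
The map r ↦ (n̂ₖ · r)ₖ is linear and, the n̂ₖ being a basis, injective; g is its composite with
the separable function t ↦ ∑ₖ ψₖ(tₖ), where ψₖ(t) = q₊ log((1+t)/2) + q₋ log((1-t)/2) is strictly
concave on (-1, 1) because log is. A separable sum of strictly concave functions is strictly
concave on the product of their domains, precomposition with an injective linear map preserves
strict concavity, and Cauchy–Schwarz puts the image of the open unit ball inside (-1, 1)³.
-/

open Matrix Set Real

theorem StrictConcaveOn.comp_linearMap_of_injective {𝕜 E F β : Type*} [Semiring 𝕜]
    [PartialOrder 𝕜] [AddCommMonoid E] [AddCommMonoid F] [AddCommMonoid β] [PartialOrder β]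
    [Module 𝕜 E] [Module 𝕜 F] [SMul 𝕜 β] {f : F → β} {s : Set F} (hf : StrictConcaveOn 𝕜 s f)
    (g : E →ₗ[𝕜] F) (hg : Function.Injective g) : StrictConcaveOn 𝕜 (g ⁻¹' s) (f ∘ g) :=
  ⟨hf.1.linear_preimage g, fun x hx y hy hxy a b ha hb hab => by
    simpa only [Function.comp, map_add, map_smul] using hf.2 hx hy (hg.ne hxy) ha hb hab⟩

theorem StrictConcaveOn.sum_pi {𝕜 ι β : Type*} {E : ι → Type*} [Fintype ι] [Semiring 𝕜]
    [PartialOrder 𝕜] [∀ i, AddCommMonoid (E i)] [∀ i, Module 𝕜 (E i)] [AddCommMonoid β]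
    [PartialOrder β] [IsOrderedCancelAddMonoid β] [Module 𝕜 β] {s : ∀ i, Set (E i)}
    {f : ∀ i, E i → β} (hf : ∀ i, StrictConcaveOn 𝕜 (s i) (f i)) :
    StrictConcaveOn 𝕜 (univ.pi s) (fun x => ∑ i, f i (x i)) := by
  refine ⟨convex_pi fun i _ => (hf i).1, fun x hx y hy hxy a b ha hb hab => ?_⟩
  obtain ⟨i, hi⟩ := Function.ne_iff.1 hxy
  simp only [Finset.smul_sum, ← Finset.sum_add_distrib, Pi.add_apply, Pi.smul_apply]
  exact Finset.sum_lt_sum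
    (fun j _ => (hf j).concaveOn.2 (hx j trivial) (hy j trivial) ha.le hb.le hab)
    ⟨i, Finset.mem_univ _, (hf i).2 (hx i trivial) (hy i trivial) hi ha hb hab⟩

noncomputable def binaryLogLikelihood (p q t : ℝ) : ℝ :=
  p * log ((1 + t) / 2) + q * log ((1 - t) / 2)

theorem strictConcaveOn_binaryLogLikelihood {p q : ℝ} (hp : 0 < p) (hq : 0 < q) :
    StrictConcaveOn ℝ (Ioo (-1) 1) (binaryLogLikelihood p q) := by
  refine ⟨convex_Ioo _ _, fun x hx y hy hxy a b ha hb hab => ?_⟩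
  have hlog {u v : ℝ} (hu : 0 < u) (hv : 0 < v) (huv : u ≠ v) :
      a * log u + b * log v < log (a * u + b * v) :=
    strictConcaveOn_log_Ioi.2 hu hv huv ha hb hab
  have hplus := hlog (u := (1 + x) / 2) (v := (1 + y) / 2) (by linarith [hx.1])
    (by linarith [hy.1]) (by contrapose! hxy; linarith)
  have hminus := hlog (u := (1 - x) / 2) (v := (1 - y) / 2) (by linarith [hx.2])
    (by linarith [hy.2]) (by contrapose! hxy; linarith)
  have hcombAdd : a * ((1 + x) / 2) + b * ((1 + y) / 2) = (1 + (a * x + b * y)) / 2 := by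
    linear_combination hab / 2
  have hcombSub : a * ((1 - x) / 2) + b * ((1 - y) / 2) = (1 - (a * x + b * y)) / 2 := by
    linear_combination hab / 2
  rw [hcombAdd] at hplus
  rw [hcombSub] at hminus
  simp only [binaryLogLikelihood, smul_eq_mul]
  nlinarith [mul_lt_mul_of_pos_left hplus hp, mul_lt_mul_of_pos_left hminus hq]

theorem sqrt_sum_sq_eq_norm_toLp {ι : Type*} [Fintype ι] (r : ι → ℝ) :
    √(∑ i, r i ^ 2) = ‖WithLp.toLp 2 r‖ := by
  simp [EuclideanSpace.norm_eq]

theorem abs_dotProduct_le_sqrt_mul_sqrt {ι : Type*} [Fintype ι] (u v : ι → ℝ) :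
    |u ⬝ᵥ v| ≤ √(∑ i, u i ^ 2) * √(∑ i, v i ^ 2) := by
  rw [sqrt_sum_sq_eq_norm_toLp, sqrt_sum_sq_eq_norm_toLp]
  convert abs_real_inner_le_norm (WithLp.toLp 2 u) (WithLp.toLp 2 v) using 2
  simp [EuclideanSpace.inner_eq_star_dotProduct, dotProduct_comm]

theorem convex_setOf_sqrt_sum_sq_lt {ι : Type*} [Fintype ι] (c : ℝ) :
    Convex ℝ {r : ι → ℝ | √(∑ i, r i ^ 2) < c} := by
  have h : {r : ι → ℝ | √(∑ i, r i ^ 2) < c}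
      = (WithLp.linearEquiv 2 ℝ (ι → ℝ)).symm.toLinearMap ⁻¹' Metric.ball 0 c := by
    ext r
    simp [sqrt_sum_sq_eq_norm_toLp]
  exact h ▸ (convex_ball _ _).linear_preimage _

/-- the log-likelihood g(r) = Σₖ Σ_{a=±1} q_{a,k} log((1 + a n̂ₖ·r)/2) of
single-qubit tomography, with linearly independent unit measurement directions n̂ₖ and
positive frequencies q_{±1,k} (`qp`/`qm`), is strictly concave on the open unit ball. -/
theorem stmt9 (n : Fin 3 → Fin 3 → ℝ)
    (hunit : ∀ k, Real.sqrt (∑ i, (n k i) ^ 2) = 1)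
    (hli : LinearIndependent ℝ n)
    (qp qm : Fin 3 → ℝ) (hqp : ∀ k, 0 < qp k) (hqm : ∀ k, 0 < qm k) :
    StrictConcaveOn ℝ {r : Fin 3 → ℝ | Real.sqrt (∑ i, (r i) ^ 2) < 1}
      (fun r => ∑ k, (qp k * Real.log ((1 + n k ⬝ᵥ r) / 2)
                    + qm k * Real.log ((1 - n k ⬝ᵥ r) / 2))) := by
  have hinj : Function.Injective (mulVecLin (of n)) := by
    rw [coe_mulVecLin, mulVec_injective_iff_isUnit, ← linearIndependent_rows_iff_isUnit]
    exact hli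
  have hconcave := (StrictConcaveOn.sum_pi fun k =>
    strictConcaveOn_binaryLogLikelihood (hqp k) (hqm k)).comp_linearMap_of_injective _ hinj
  refine hconcave.subset (fun r hr k _ => ?_) (convex_setOf_sqrt_sum_sq_lt 1)
  have hdot := abs_dotProduct_le_sqrt_mul_sqrt (n k) r
  rw [hunit k, one_mul] at hdot
  exact abs_lt.1 (hdot.trans_lt hr)
end

section
/- Let ε ∈ (0, π/2), write c = cos ε, s = sin ε, and let n̂₁ = (c, s/√2, s/√2), n̂₂ = (s/√2, c, s/√2), n̂₃ = (s/√2, s/√2, c) ∈ ℝ³. Let 𝒲ᵉ = (1/4)·𝟙₄ + (1/4)·Σ_{k=1}^{3} (n̂ₖ·σ⃗) ⊗ (n̂ₖ·σ⃗). Let χ = (1/2)·arccos(1/√3) and |ψ⟩ = cos²χ·(|0⟩ + e^{iπ/4} tan χ·|1⟩) ⊗ (tan χ·|0⟩ + e^{−3iπ/4}·|1⟩) ∈ ℂ⁴. Then ⟨ψ| 𝒲ᵉ |ψ⟩ = (cos 2ε − 2√2·sin 2ε − 1)/8, and in particular ⟨ψ| 𝒲ᵉ |ψ⟩ < 0. 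-/
set_option maxHeartbeats 2000000


open Matrix Kronecker Real

noncomputable def σx : Matrix (Fin 2) (Fin 2) ℂ := !![0, 1; 1, 0]
noncomputable def σy : Matrix (Fin 2) (Fin 2) ℂ := !![0, -Complex.I; Complex.I, 0]
noncomputable def σz : Matrix (Fin 2) (Fin 2) ℂ := !![1, 0; 0, -1]

/-- v·σ⃗ = v₁σx + v₂σy + v₃σz for v ∈ ℝ³. -/
noncomputable def pvec (v : Fin 3 → ℝ) : Matrix (Fin 2) (Fin 2) ℂ :=
  v 0 • σx + v 1 • σy + v 2 • σz

/-- for the misaligned directions n̂ₖ, the evaluated singlet witness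
𝒲ᵉ = (1/4)𝟙 + (1/4)Σₖ (n̂ₖ·σ⃗)⊗(n̂ₖ·σ⃗) has expectation value
(cos 2ε − 2√2 sin 2ε − 1)/8 < 0 on the separable product state |ψ⟩. -/
theorem stmt12 (ε : ℝ) (hε : ε ∈ Set.Ioo 0 (π / 2))
    (n : Fin 3 → Fin 3 → ℝ)
    (hn : n = ![![cos ε, sin ε / Real.sqrt 2, sin ε / Real.sqrt 2],
                ![sin ε / Real.sqrt 2, cos ε, sin ε / Real.sqrt 2],
                ![sin ε / Real.sqrt 2, sin ε / Real.sqrt 2, cos ε]])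
    (W : Matrix (Fin 2 × Fin 2) (Fin 2 × Fin 2) ℂ)
    (hW : W = (1 / 4 : ℂ) • (1 : Matrix (Fin 2 × Fin 2) (Fin 2 × Fin 2) ℂ)
            + (1 / 4 : ℂ) • ∑ k : Fin 3, pvec (n k) ⊗ₖ pvec (n k))
    (χ : ℝ) (hχ : χ = Real.arccos (1 / Real.sqrt 3) / 2)
    (ψ : Fin 2 × Fin 2 → ℂ)
    (hψ : ψ = fun p => ((cos χ) ^ 2 : ℂ) *
      ((![1, Complex.exp (Complex.I * (π / 4)) * (Real.tan χ : ℂ)] : Fin 2 → ℂ) p.1 *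
       (![(Real.tan χ : ℂ), Complex.exp (-(Complex.I) * (3 * π / 4))] : Fin 2 → ℂ) p.2)) :
    star ψ ⬝ᵥ W.mulVec ψ
        = (((cos (2 * ε) - 2 * Real.sqrt 2 * sin (2 * ε) - 1) / 8 : ℝ) : ℂ) ∧
    ((cos (2 * ε) - 2 * Real.sqrt 2 * sin (2 * ε) - 1) / 8 : ℝ) < 0 := by
  have h2 : Real.sqrt 2 ^ 2 = 2 := Real.sq_sqrt (by norm_num)
  have h3 : Real.sqrt 3 ^ 2 = 3 := Real.sq_sqrt (by norm_num)
  have h2pos : 0 < Real.sqrt 2 := Real.sqrt_pos.2 (by norm_num)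
  have h3pos : 0 < Real.sqrt 3 := Real.sqrt_pos.2 (by norm_num)
  constructor
  · -- trig facts about χ
    have h31 : 1 ≤ Real.sqrt 3 := by nlinarith
    have h2χ : 2 * χ = Real.arccos (1 / Real.sqrt 3) := by rw [hχ]; ring
    have hcos2 : Real.cos (2 * χ) = 1 / Real.sqrt 3 := by
      rw [h2χ]
      refine Real.cos_arccos ?_ ?_
      · have : (0:ℝ) < 1 / Real.sqrt 3 := by positivity
        linarith
      · rw [div_le_one h3pos]; exact h31
    have hsin2 : Real.sin (2 * χ) = Real.sqrt 2 / Real.sqrt 3 := by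
      rw [h2χ, Real.sin_arccos]
      have h1 : 1 - (1 / Real.sqrt 3) ^ 2 = 2 / 3 := by
        field_simp; nlinarith
      rw [h1, Real.sqrt_div (by norm_num : (0:ℝ) ≤ 2) 3]
    have hc2 : cos χ ^ 2 = (3 + Real.sqrt 3) / 6 := by
      have := Real.cos_sq χ
      rw [hcos2] at this
      rw [this]; field_simp; nlinarith
    have hs2 : sin χ ^ 2 = (3 - Real.sqrt 3) / 6 := by
      have h := Real.sin_sq χ
      have := Real.cos_sq χ
      rw [hcos2] at this
      rw [h, this]; field_simp; nlinarith
    have hsc : sin χ * cos χ = Real.sqrt 2 * Real.sqrt 3 / 6 := by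
      have hh := Real.sin_two_mul χ
      rw [hsin2] at hh
      field_simp at hh
      linear_combination (-(Real.sqrt 3)/6) * hh - (sin χ * cos χ/3) * h3
    -- exponentials
    have he1 : Complex.exp (Complex.I * (↑π / 4)) = ((Real.sqrt 2 / 2 : ℝ) : ℂ) * (1 + Complex.I) := by
      rw [mul_comm, Complex.exp_mul_I]
      rw [show ((π:ℂ)/4) = ((π/4 : ℝ) : ℂ) by push_cast; ring,
        ← Complex.ofReal_cos, ← Complex.ofReal_sin, Real.cos_pi_div_four, Real.sin_pi_div_four]
      push_cast; ring
    have he2 : Complex.exp (-Complex.I * (3 * ↑π / 4)) = -((Real.sqrt 2 / 2 : ℝ) : ℂ) * (1 + Complex.I) := by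
      rw [show -Complex.I * (3 * (π:ℂ) / 4) = ((-(3*π/4) : ℝ) : ℂ) * Complex.I by push_cast; ring,
        Complex.exp_mul_I]
      rw [← Complex.ofReal_cos, ← Complex.ofReal_sin, Real.cos_neg, Real.sin_neg,
        show (3*π/4 : ℝ) = π - π/4 by ring, Real.cos_pi_sub, Real.sin_pi_sub,
        Real.cos_pi_div_four, Real.sin_pi_div_four]
      push_cast; ring
    have hcne : cos χ ≠ 0 := by
      intro h
      rw [h] at hc2
      norm_num at hc2
      nlinarith
    have htc : Real.tan χ * cos χ = sin χ := by
      rw [Real.tan_eq_sin_div_cos]; field_simp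
    have e1 : cos χ ^ 2 * Real.tan χ = Real.sqrt 2 * Real.sqrt 3 / 6 := by
      have h : cos χ ^ 2 * Real.tan χ = (Real.tan χ * cos χ) * cos χ := by ring
      rw [h, htc]; linear_combination hsc
    have e2 : cos χ ^ 2 * Real.tan χ * Real.tan χ = (3 - Real.sqrt 3) / 6 := by
      have h : cos χ ^ 2 * Real.tan χ * Real.tan χ = (Real.tan χ * cos χ) * (Real.tan χ * cos χ) := by ring
      rw [h, htc, ← sq, hs2]
    have hc2c : ((cos χ : ℝ) : ℂ) ^ 2 = (3 + ((Real.sqrt 3 : ℝ) : ℂ)) / 6 := by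
      exact_mod_cast congrArg (fun x : ℝ => (x : ℂ)) hc2
    have e1c : ((cos χ : ℝ) : ℂ) ^ 2 * ((Real.tan χ : ℝ) : ℂ)
        = ((Real.sqrt 2 : ℝ):ℂ) * ((Real.sqrt 3:ℝ):ℂ) / 6 := by
      exact_mod_cast congrArg (fun x : ℝ => (x : ℂ)) e1
    have e2c : ((cos χ : ℝ) : ℂ) ^ 2 * ((Real.tan χ : ℝ) : ℂ) * ((Real.tan χ : ℝ) : ℂ)
        = (3 - ((Real.sqrt 3:ℝ):ℂ)) / 6 := by
      exact_mod_cast congrArg (fun x : ℝ => (x : ℂ)) e2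
    have h2c : ((Real.sqrt 2 : ℝ) : ℂ) ^ 2 = 2 := by
      exact_mod_cast congrArg (fun x : ℝ => (x : ℂ)) h2
    have h3c : ((Real.sqrt 3 : ℝ) : ℂ) ^ 2 = 3 := by
      exact_mod_cast congrArg (fun x : ℝ => (x : ℂ)) h3
    have hψ2 : ψ = fun p => (!![((Real.sqrt 2 : ℝ):ℂ) * (Real.sqrt 3 : ℝ) / 6,
            -(((Real.sqrt 2 : ℝ):ℂ) * ((3:ℂ) + (Real.sqrt 3 : ℝ)) * (1 + Complex.I)) / 12;
          ((Real.sqrt 2 : ℝ):ℂ) * ((3:ℂ) - (Real.sqrt 3 : ℝ)) * (1 + Complex.I) / 12,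
            -Complex.I * ((Real.sqrt 2 : ℝ):ℂ) * (Real.sqrt 3 : ℝ) / 6] : Matrix (Fin 2) (Fin 2) ℂ) p.1 p.2 := by
      rw [hψ, he1, he2]
      push_cast at hc2c e1c e2c h2c
      funext p
      fin_cases p <;> simp <;> push_cast
      · linear_combination e1c
      · linear_combination (-(((Real.sqrt 2:ℝ):ℂ))/2*(1+Complex.I)) * hc2c
      · linear_combination (((Real.sqrt 2:ℝ):ℂ)/2*(1+Complex.I)) * e2c
      · linear_combination (-(((Real.sqrt 2:ℝ):ℂ)^2)/4*(1+Complex.I)^2) * e1c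
          + (-(((Real.sqrt 2:ℝ):ℂ)*((Real.sqrt 3:ℝ):ℂ)/24)*(1+Complex.I)^2) * h2c
          + (-(((Real.sqrt 2:ℝ):ℂ)*((Real.sqrt 3:ℝ):ℂ)/12)) * Complex.I_sq
    have hn' : n = ![![cos ε, sin ε * Real.sqrt 2 / 2, sin ε * Real.sqrt 2 / 2],
                ![sin ε * Real.sqrt 2 / 2, cos ε, sin ε * Real.sqrt 2 / 2],
                ![sin ε * Real.sqrt 2 / 2, sin ε * Real.sqrt 2 / 2, cos ε]] := by
      have hd : sin ε / Real.sqrt 2 = sin ε * Real.sqrt 2 / 2 := by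
        rw [div_eq_div_iff h2pos.ne' (by norm_num : (2:ℝ) ≠ 0)]
        linear_combination (-(sin ε)) * h2
      rw [hn, hd]
    rw [hψ2, hW, hn']
    rw [Real.cos_two_mul, Real.sin_two_mul]
    have hI := Complex.I_sq
    have htrig : Complex.cos (ε:ℂ) ^ 2 + Complex.sin (ε:ℂ) ^ 2 = 1 := by
      rw [add_comm]; exact Complex.sin_sq_add_cos_sq _
    simp [dotProduct, Matrix.mulVec, Fintype.sum_prod_type, Fin.sum_univ_succ,
      Matrix.kroneckerMap_apply, pvec, σx, σy, σz, Matrix.one_apply, Matrix.smul_apply,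
      Matrix.add_apply, Matrix.sum_apply, Prod.ext_iff, map_ofNat]
    have hA3 : ((Real.sqrt 2:ℝ):ℂ) ^ 3 = 2 * ((Real.sqrt 2:ℝ):ℂ) := by
      rw [pow_succ, h2c]
    have hA4 : ((Real.sqrt 2:ℝ):ℂ) ^ 4 = 4 := by
      rw [show (4:ℕ) = 2 + 2 from rfl, pow_add, h2c]; norm_num
    have hB3 : ((Real.sqrt 3:ℝ):ℂ) ^ 3 = 3 * ((Real.sqrt 3:ℝ):ℂ) := by
      rw [pow_succ, h3c]
    have hB4 : ((Real.sqrt 3:ℝ):ℂ) ^ 4 = 9 := by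
      rw [show (4:ℕ) = 2 + 2 from rfl, pow_add, h3c]; norm_num
    have hI3 : Complex.I ^ 3 = -Complex.I := by
      rw [pow_succ, Complex.I_sq]; ring
    have hI4 : Complex.I ^ 4 = 1 := by
      rw [show (4:ℕ) = 2 + 2 from rfl, pow_add, Complex.I_sq]; norm_num
    have hsin2ε : Complex.sin (ε:ℂ) ^ 2 = 1 - Complex.cos (ε:ℂ) ^ 2 := by
      linear_combination htrig
    ring_nf
    simp only [hA3, hA4, hB3, hB4, h2c, h3c, hI3, hI4, Complex.I_sq, hsin2ε]
    ring
  · -- negativity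
    have h1 : cos (2*ε) ≤ 1 := Real.cos_le_one _
    have hsp : 0 < sin (2*ε) := by
      apply Real.sin_pos_of_pos_of_lt_pi
      · linarith [hε.1]
      · have := Real.pi_pos
        linarith [hε.2]
    nlinarith [mul_pos h2pos hsp]
end

section
/- Let n ≥ 4 be even, 0 ≤ ε ≤ π/(2n), and define for k = 1,…,n and j = 1,…,n the 2×2 matrices N_k^{(j)} = cos(kπ/n + δ_k^{(j)}ε)·σx + sin(kπ/n + δ_k^{(j)}ε)·σy, where δ_k^{(j)} = (−1)^k if j ≤ n/2 and δ_k^{(j)} = −(−1)^k if j > n/2. Let |ψₙ⟩ = (1/2)·(|0⟩^{⊗n/2} + e^{iπ/4}|1⟩^{⊗n/2}) ⊗ (|0⟩^{⊗n/2} + e^{−iπ/4}|1⟩^{⊗n/2}) ∈ ℂ^{2ⁿ}, and let 𝒲ᵉ = (1/2)·[ 𝟙^{⊗n} − Σ_{ℓ=±1} ((𝟙 + ℓ·σz)/2)^{⊗n} − (1/n)·Σ_{k=1}^{n} (−1)^k · (N_k^{(1)} ⊗ N_k^{(2)} ⊗ ⋯ ⊗ N_k^{(n)}) ]. Then ⟨ψₙ|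 𝒲ᵉ |ψₙ⟩ = −(1/4)·sin(nε); in particular this is negative for 0 < ε ≤ π/(2n). -/
open Matrix Real

/-- n-fold Kronecker power A^{⊗n} of a 2×2 matrix, on the index set Fin n → Fin 2. -/
noncomputable def kronPow (n : ℕ) (A : Matrix (Fin 2) (Fin 2) ℂ) :
    Matrix (Fin n → Fin 2) (Fin n → Fin 2) ℂ :=
  Matrix.of fun i j => ∏ t, A (i t) (j t)

/-- Kronecker product A₁ ⊗ A₂ ⊗ ⋯ ⊗ Aₙ of a family of 2×2 matrices. -/
noncomputable def kronFam (n : ℕ) (A : Fin n → Matrix (Fin 2) (Fin 2) ℂ) :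
    Matrix (Fin n → Fin 2) (Fin n → Fin 2) ℂ :=
  Matrix.of fun i j => ∏ t, A t (i t) (j t)

/-!
Up to the factor 1/2, ψₙ is the product of the GHZ-type vectors |0…0⟩ + e^{iπ/4}|1…1⟩ and
|0…0⟩ + e^{-iπ/4}|1…1⟩ on the two halves of the qubits, and every term of 𝒲ᵉ is a Kronecker
product of one-qubit operators, so its expectation factorizes over the two halves. On a block of
m qubits in the state |0…0⟩ + e^{iφ}|1…1⟩ the operator B^{⊗m} has expectation
B₀₀^m + B₁₁^m + e^{iφ} B₀₁^m + e^{-iφ} B₁₀^m. This gives 1 for 𝟙, 1/4 for each projector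
((𝟙 ± σz)/2)^{⊗n}, and cos(mθ₁ - π/4) cos(mθ₂ + π/4) = (-1)^k (1 + sin nε)/2 for the k-th
correlation term, where θ₁,₂ = kπ/n ± (-1)^k ε are the angles on the two halves. Hence
⟨𝒲ᵉ⟩ = (1 - 1/2 - (1 + sin nε)/2)/2 = -sin(nε)/4.
-/

open Finset

theorem dotProduct_star_mulVec_sum_smul_single {R ι κ : Type*} [CommSemiring R] [StarRing R]
    [Fintype ι] [DecidableEq ι] [Fintype κ] (M : Matrix ι ι R) (w : κ → R) (e : κ → ι) :
    star (∑ q, w q • Pi.single (e q) 1) ⬝ᵥ M *ᵥ (∑ q, w q • Pi.single (e q) 1)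
      = ∑ q, ∑ q', star (w q) * M (e q) (e q') * w q' := by
  simp only [star_sum, star_smul, Pi.star_single, star_one, mulVec_sum, mulVec_smul, mulVec_single,
    MulOpposite.op_one, one_smul, dotProduct_sum, dotProduct_smul, sum_dotProduct, smul_dotProduct,
    single_dotProduct, col_apply, one_mul, smul_eq_mul]
  simp_rw [Finset.mul_sum]
  rw [Finset.sum_comm]
  exact sum_congr rfl fun _ _ => sum_congr rfl fun _ _ => by ring

theorem dotProduct_star_smul_mulVec_smul {R ι : Type*} [CommSemiring R] [StarRing R] [Fintype ι]
    (M : Matrix ι ι R) (c : R) (v : ι → R) :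
    star (c • v) ⬝ᵥ M *ᵥ (c • v) = star c * c * (star v ⬝ᵥ M *ᵥ v) := by
  rw [star_smul, mulVec_smul, dotProduct_smul, smul_dotProduct, smul_eq_mul, smul_eq_mul]
  ring

section GHZ

variable {n : ℕ} (s : Finset (Fin n))

-- `ghzVec s u` is `u 0 |0…0⟩ + u 1 |1…1⟩` on the qubits of `s` and constant in the others,
-- so a product state of two complementary blocks is a pointwise product.
def ghzVec (u : Fin 2 → ℂ) : (Fin n → Fin 2) → ℂ :=
  fun i => ∑ a, u a * ∏ t ∈ s, (Pi.single a 1 : Fin 2 → ℂ) (i t)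

def blockIndex (a b : Fin 2) : Fin n → Fin 2 :=
  fun t => if t ∈ s then a else b

def ghzExpect (u : Fin 2 → ℂ) (A : Fin n → Matrix (Fin 2) (Fin 2) ℂ) : ℂ :=
  ∑ a, ∑ c, star (u a) * u c * ∏ t ∈ s, A t a c

theorem ghzVec_apply (u : Fin 2 → ℂ) (i : Fin n → Fin 2) :
    ghzVec s u i = ∑ a, u a * if ∀ t ∈ s, i t = a then 1 else 0 := by
  simp [ghzVec, Pi.single_apply, prod_boole]

theorem ghzVec_eq_add (u : Fin 2 → ℂ) (i : Fin n → Fin 2) :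
    ghzVec s u i = u 0 * ∏ t ∈ s, (![1, 0] : Fin 2 → ℂ) (i t)
      + u 1 * ∏ t ∈ s, (![0, 1] : Fin 2 → ℂ) (i t) := by
  have h₀ : (Pi.single 0 1 : Fin 2 → ℂ) = ![1, 0] := by ext a; fin_cases a <;> rfl
  have h₁ : (Pi.single 1 1 : Fin 2 → ℂ) = ![0, 1] := by ext a; fin_cases a <;> rfl
  rw [ghzVec, Fin.sum_univ_two, h₀, h₁]

theorem eq_blockIndex_iff {i : Fin n → Fin 2} {a b : Fin 2} :
    i = blockIndex s a b ↔ (∀ t ∈ s, i t = a) ∧ ∀ t ∈ sᶜ, i t = b := by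
  simp only [funext_iff, blockIndex, mem_compl]
  exact ⟨fun h => ⟨fun t ht => by simpa [ht] using h t, fun t ht => by simpa [ht] using h t⟩,
    fun h t => by split_ifs with ht; exacts [h.1 t ht, h.2 t ht]⟩

theorem ghzVec_mul_ghzVec_compl (u v : Fin 2 → ℂ) :
    ghzVec s u * ghzVec sᶜ v
      = ∑ q : Fin 2 × Fin 2, (u q.1 * v q.2) • Pi.single (blockIndex s q.1 q.2) 1 := by
  ext i
  simp only [Pi.mul_apply, ghzVec_apply, Finset.sum_apply, Pi.smul_apply, Pi.single_apply,
    smul_eq_mul, eq_blockIndex_iff, Fintype.sum_prod_type, sum_mul_sum]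
  refine sum_congr rfl fun a _ => sum_congr rfl fun b _ => ?_
  rw [mul_mul_mul_comm, ite_zero_mul_ite_zero, one_mul, mul_ite, mul_one, mul_zero]

theorem kronFam_blockIndex (A : Fin n → Matrix (Fin 2) (Fin 2) ℂ) (a b c d : Fin 2) :
    kronFam n A (blockIndex s a b) (blockIndex s c d)
      = (∏ t ∈ s, A t a c) * ∏ t ∈ sᶜ, A t b d := by
  rw [kronFam, of_apply, ← prod_mul_prod_compl s]
  congr 1 <;> refine prod_congr rfl fun t ht => ?_ <;> simp_all [blockIndex]

theorem dotProduct_star_kronFam_mulVec_ghzVec (u v : Fin 2 → ℂ)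
    (A : Fin n → Matrix (Fin 2) (Fin 2) ℂ) :
    star (ghzVec s u * ghzVec sᶜ v) ⬝ᵥ kronFam n A *ᵥ (ghzVec s u * ghzVec sᶜ v)
      = ghzExpect s u A * ghzExpect sᶜ v A := by
  rw [ghzVec_mul_ghzVec_compl, dotProduct_star_mulVec_sum_smul_single]
  simp only [kronFam_blockIndex, ghzExpect, Fintype.sum_prod_type, sum_mul_sum, star_mul']
  congr! 4 with a b c d
  ring

end GHZ

section TwoLevel

noncomputable def phaseVec (φ : ℝ) : Fin 2 → ℂ := ![1, Complex.exp (Complex.I * φ)]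

noncomputable def inPlaneSpin (θ : ℝ) : Matrix (Fin 2) (Fin 2) ℂ := cos θ • σx + sin θ • σy

theorem star_exp_I_mul_self (φ : ℝ) :
    star (Complex.exp (Complex.I * φ)) * Complex.exp (Complex.I * φ) = 1 := by
  rw [Complex.star_def, ← Complex.exp_conj, ← Complex.exp_add]
  simp

variable {n : ℕ} (s : Finset (Fin n)) (φ : ℝ)

theorem ghzExpect_phaseVec {A : Fin n → Matrix (Fin 2) (Fin 2) ℂ} {B : Matrix (Fin 2) (Fin 2) ℂ}
    (hA : ∀ t ∈ s, A t = B) :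
    ghzExpect s (phaseVec φ) A = B 0 0 ^ #s + Complex.exp (Complex.I * φ) * B 0 1 ^ #s
      + star (Complex.exp (Complex.I * φ)) * B 1 0 ^ #s + B 1 1 ^ #s := by
  have hprod : ∀ a c, ∏ t ∈ s, A t a c = B a c ^ #s := fun a c => by
    rw [prod_congr rfl fun t ht => by rw [hA t ht], prod_const]
  simp only [ghzExpect, hprod, Fin.sum_univ_two, phaseVec, Matrix.cons_val_zero,
    Matrix.cons_val_one, star_one, one_mul, mul_one]
  linear_combination B 1 1 ^ #s * star_exp_I_mul_self φ

variable {s}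

theorem ghzExpect_phaseVec_one (hs : #s ≠ 0) :
    ghzExpect s (phaseVec φ) (fun _ => 1) = 2 := by
  rw [ghzExpect_phaseVec s φ fun _ _ => rfl]
  simp [zero_pow hs]
  norm_num

theorem ghzExpect_phaseVec_proj (hs : #s ≠ 0) {l : ℝ} (hl : l = 1 ∨ l = -1) :
    ghzExpect s (phaseVec φ) (fun _ => (1 / 2 : ℂ) • (1 + l • σz)) = 1 := by
  rw [ghzExpect_phaseVec s φ fun _ _ => rfl]
  rcases hl with rfl | rfl <;> simp [σz, zero_pow hs] <;> norm_num

theorem ghzExpect_phaseVec_inPlaneSpin (hs : #s ≠ 0) {A : Fin n → Matrix (Fin 2) (Fin 2) ℂ}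
    {θ : ℝ} (hA : ∀ t ∈ s, A t = inPlaneSpin θ) :
    ghzExpect s (phaseVec φ) A = (2 * cos (#s * θ - φ) : ℝ) := by
  rw [ghzExpect_phaseVec s φ hA]
  have hneg : Complex.cos θ + -(Complex.sin θ * Complex.I) = Complex.exp (-θ * Complex.I) := by
    rw [← Complex.cos_add_sin_I, Complex.cos_neg, Complex.sin_neg]
    ring
  simp only [inPlaneSpin, σx, σy]
  simp [zero_pow hs, hneg, Complex.cos_add_sin_I, ← Complex.exp_nat_mul,
    ← Complex.exp_conj, ← Complex.exp_add, Complex.two_cos]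
  rw [add_comm]
  congr 2 <;> ring

end TwoLevel

theorem kronFam_one (n : ℕ) : kronFam n (fun _ => 1) = 1 := by
  ext i j
  simp [kronFam, Matrix.one_apply, Finset.prod_ite_zero, funext_iff]

theorem cos_mul_cos_neg_one_pow (k : ℕ) (x : ℝ) :
    cos (k * π / 2 + (-1) ^ k * x - π / 4) * cos (k * π / 2 - (-1) ^ k * x + π / 4)
      = (-1) ^ k * (1 + sin (2 * x)) / 2 := by
  have hsum := cos_add_cos (k * π) ((-1) ^ k * (2 * x) - π / 2)
  have hsin : sin ((-1) ^ k * (2 * x)) = (-1) ^ k * sin (2 * x) := by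
    rcases neg_one_pow_eq_or ℝ k with h | h <;> simp [h]
  rw [cos_nat_mul_pi, cos_sub_pi_div_two, hsin] at hsum
  rw [show k * π / 2 + (-1) ^ k * x - π / 4 = (k * π + ((-1) ^ k * (2 * x) - π / 2)) / 2 by ring,
    show k * π / 2 - (-1) ^ k * x + π / 4 = (k * π - ((-1) ^ k * (2 * x) - π / 2)) / 2 by ring]
  rw [mul_one_add, hsum]
  ring

theorem neg_one_pow_mul_ghzExpect_mul_ghzExpect {n m k : ℕ} {s : Finset (Fin n)} {ε : ℝ}
    (hm : m ≠ 0) (hs : #s = m) (hsc : #sᶜ = m) {A : Fin n → Matrix (Fin 2) (Fin 2) ℂ}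
    (hA₁ : ∀ t ∈ s, A t = inPlaneSpin (k * π / (2 * m) + (-1) ^ k * ε))
    (hA₂ : ∀ t ∈ sᶜ, A t = inPlaneSpin (k * π / (2 * m) - (-1) ^ k * ε)) :
    (-1) ^ k * (ghzExpect s (phaseVec (π / 4)) A * ghzExpect sᶜ (phaseVec (-(π / 4))) A)
      = (2 * (1 + sin (2 * m * ε)) : ℝ) := by
  have hm' : (m : ℝ) ≠ 0 := Nat.cast_ne_zero.mpr hm
  have hsq : ((-1 : ℝ) ^ k) ^ 2 = 1 := by rw [← pow_mul, mul_comm, pow_mul, neg_one_sq, one_pow]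
  have htrig : (-1 : ℝ) ^ k * (2 * cos (m * (k * π / (2 * m) + (-1) ^ k * ε) - π / 4)
      * (2 * cos (m * (k * π / (2 * m) - (-1) ^ k * ε) - -(π / 4))))
        = 2 * (1 + sin (2 * m * ε)) := by
    rw [show m * (k * π / (2 * m) + (-1) ^ k * ε) - π / 4
        = k * π / 2 + (-1) ^ k * (m * ε) - π / 4 by field_simp,
      show m * (k * π / (2 * m) - (-1) ^ k * ε) - -(π / 4)
        = k * π / 2 - (-1) ^ k * (m * ε) + π / 4 by field_simp; ring,
      show 2 * m * ε = 2 * (m * ε) by ring]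
    linear_combination 4 * (-1 : ℝ) ^ k * cos_mul_cos_neg_one_pow k (m * ε)
      + 2 * (1 + sin (2 * (m * ε))) * hsq
  rw [ghzExpect_phaseVec_inPlaneSpin _ (by omega) hA₁,
    ghzExpect_phaseVec_inPlaneSpin _ (by omega) hA₂, hs, hsc]
  exact_mod_cast htrig

theorem dotProduct_star_witness_mulVec {ι : Type*} [Fintype ι] [DecidableEq ι] {n : ℕ} (hn : n ≠ 0)
    (ψ : ι → ℂ) (P : ℝ → Matrix ι ι ℂ) (F : ℕ → Matrix ι ι ℂ) (c : ℝ)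
    (h₁ : star ψ ⬝ᵥ (1 : Matrix ι ι ℂ) *ᵥ ψ = 1)
    (hP : ∀ l ∈ ({1, -1} : Finset ℝ), star ψ ⬝ᵥ P l *ᵥ ψ = 1 / 4)
    (hF : ∀ k, (-1) ^ k * star ψ ⬝ᵥ F k *ᵥ ψ = ((1 + c) / 2 : ℝ)) :
    star ψ ⬝ᵥ ((1 / 2 : ℂ) • (1 - ∑ l ∈ ({1, -1} : Finset ℝ), P l
        - (n : ℂ)⁻¹ • ∑ k ∈ Icc 1 n, (-1 : ℂ) ^ k • F k)) *ᵥ ψ = (-(1 / 4) * c : ℝ) := by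
  simp only [smul_mulVec, sub_mulVec, sum_mulVec, dotProduct_smul, dotProduct_sub,
    dotProduct_sum, smul_eq_mul]
  rw [h₁, sum_congr rfl hP, sum_congr rfl fun k _ => hF k, sum_const, sum_const,
    card_pair (by norm_num), Nat.card_Icc, Nat.add_sub_cancel, nsmul_eq_mul, nsmul_eq_mul]
  have hn' : (n : ℂ) ≠ 0 := Nat.cast_ne_zero.mpr hn
  push_cast
  field_simp
  ring

theorem sin_nat_mul_pos {n : ℕ} {ε : ℝ} (hn : n ≠ 0) (hε : 0 < ε) (hε₁ : ε ≤ π / (2 * n)) :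
    0 < sin (n * ε) := by
  have hn' : (0 : ℝ) < n := Nat.cast_pos.mpr (Nat.pos_of_ne_zero hn)
  rw [le_div_iff₀ (by positivity)] at hε₁
  exact sin_pos_of_pos_of_lt_pi (mul_pos hn' hε) (by linarith [pi_pos])

theorem stmt14_general (n : ℕ) (hn : 4 ≤ n) (heven : Even n)
    (ε : ℝ) (hε₁ : ε ≤ π / (2 * n))
    (δ : ℕ → Fin n → ℝ)
    (hδ : ∀ k j, δ k j = if (j : ℕ) < n / 2 then (-1 : ℝ) ^ k else -(-1 : ℝ) ^ k)
    (N : ℕ → Fin n → Matrix (Fin 2) (Fin 2) ℂ)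
    (hN : ∀ k j, N k j = cos ((k : ℝ) * π / n + δ k j * ε) • σx
                       + sin ((k : ℝ) * π / n + δ k j * ε) • σy)
    (ψ : (Fin n → Fin 2) → ℂ)
    (hψ : ψ = fun i => (1 / 2 : ℂ) *
      ((∏ t ∈ Finset.univ.filter (fun t : Fin n => (t : ℕ) < n / 2), (![1, 0] : Fin 2 → ℂ) (i t))
        + Complex.exp (Complex.I * (π / 4)) *
          ∏ t ∈ Finset.univ.filter (fun t : Fin n => (t : ℕ) < n / 2), (![0, 1] : Fin 2 → ℂ) (i t)) *
      ((∏ t ∈ Finset.univ.filter (fun t : Fin n => ¬ (t : ℕ) < n / 2), (![1, 0] : Fin 2 → ℂ) (i t))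
        + Complex.exp (-(Complex.I) * (π / 4)) *
          ∏ t ∈ Finset.univ.filter (fun t : Fin n => ¬ (t : ℕ) < n / 2), (![0, 1] : Fin 2 → ℂ) (i t)))
    (W : Matrix (Fin n → Fin 2) (Fin n → Fin 2) ℂ)
    (hW : W = (1 / 2 : ℂ) • ((1 : Matrix (Fin n → Fin 2) (Fin n → Fin 2) ℂ)
        - ∑ l ∈ ({1, -1} : Finset ℝ),
            kronPow n ((1 / 2 : ℂ) • ((1 : Matrix (Fin 2) (Fin 2) ℂ) + l • σz))
        - (n : ℂ)⁻¹ • ∑ k ∈ Finset.Icc 1 n, ((-1 : ℂ)) ^ k • kronFam n (N k))) :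
    star ψ ⬝ᵥ W.mulVec ψ = ((-(1 / 4) * sin (n * ε) : ℝ) : ℂ) ∧
    (0 < ε → (-(1 / 4) * sin (n * ε) : ℝ) < 0) := by
  obtain ⟨m, hm⟩ := heven
  set s : Finset (Fin n) := univ.filter fun t => (t : ℕ) < n / 2 with hs_def
  have hs : #s = m := by rw [Fin.card_filter_val_lt]; omega
  have hsc : #sᶜ = m := by rw [card_compl, Fintype.card_fin]; omega
  have hnm : (n : ℝ) = 2 * m := by rw [hm]; push_cast; ring
  have hψ_eq :
      ψ = (1 / 2 : ℂ) • (ghzVec s (phaseVec (π / 4)) * ghzVec sᶜ (phaseVec (-(π / 4)))) := by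
    rw [hψ, ← compl_filter, ← hs_def]
    ext i
    simp only [Pi.smul_apply, Pi.mul_apply, ghzVec_eq_add, phaseVec, Matrix.cons_val_zero,
      Matrix.cons_val_one, one_mul, smul_eq_mul]
    push_cast
    ring_nf
  have hexpect : ∀ A, star ψ ⬝ᵥ kronFam n A *ᵥ ψ
      = ghzExpect s (phaseVec (π / 4)) A * ghzExpect sᶜ (phaseVec (-(π / 4))) A / 4 := by
    intro A
    rw [hψ_eq, dotProduct_star_smul_mulVec_smul, dotProduct_star_kronFam_mulVec_ghzVec]
    norm_num
    ring
  refine ⟨?_, fun hε => by linarith [sin_nat_mul_pos (by omega) hε hε₁]⟩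
  rw [hW]
  refine dotProduct_star_witness_mulVec (by omega) ψ _ _ _ ?_ ?_ fun k => ?_
  · rw [← kronFam_one, hexpect, ghzExpect_phaseVec_one _ (by omega),
      ghzExpect_phaseVec_one _ (by omega)]
    norm_num
  · intro l hl
    have hl' : l = 1 ∨ l = -1 := by simpa using hl
    rw [show kronPow n _ = kronFam n _ from rfl, hexpect, ghzExpect_phaseVec_proj _ (by omega) hl',
      ghzExpect_phaseVec_proj _ (by omega) hl']
    norm_num
  · rw [hexpect, ← mul_div_assoc, neg_one_pow_mul_ghzExpect_mul_ghzExpect (by omega) hs hsc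
      (fun t ht => by rw [hN, hδ, if_pos (mem_filter.mp ht).2, hnm, inPlaneSpin])
      (fun t ht => by
        rw [hN, hδ, if_neg (by simpa [s] using ht), hnm, inPlaneSpin, neg_mul, ← sub_eq_add_neg]),
      hnm]
    push_cast
    ring

/-- for even n ≥ 4 and 0 ≤ ε ≤ π/(2n), the GHZ witness evaluated with the
misaligned settings N_k^{(j)} has expectation value −(1/4)sin(nε) on the biseparable
state |ψₙ⟩ = (1/2)(|0⟩^{⊗n/2} + e^{iπ/4}|1⟩^{⊗n/2})⊗(|0⟩^{⊗n/2} + e^{−iπ/4}|1⟩^{⊗n/2}),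
which is negative as soon as ε > 0. -/
theorem stmt14 (n : ℕ) (hn : 4 ≤ n) (heven : Even n)
    (ε : ℝ) (hε₀ : 0 ≤ ε) (hε₁ : ε ≤ π / (2 * n))
    (δ : ℕ → Fin n → ℝ)
    (hδ : ∀ k j, δ k j = if (j : ℕ) < n / 2 then (-1 : ℝ) ^ k else -(-1 : ℝ) ^ k)
    (N : ℕ → Fin n → Matrix (Fin 2) (Fin 2) ℂ)
    (hN : ∀ k j, N k j = cos ((k : ℝ) * π / n + δ k j * ε) • σx
                       + sin ((k : ℝ) * π / n + δ k j * ε) • σy)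
    (ψ : (Fin n → Fin 2) → ℂ)
    (hψ : ψ = fun i => (1 / 2 : ℂ) *
      ((∏ t ∈ Finset.univ.filter (fun t : Fin n => (t : ℕ) < n / 2), (![1, 0] : Fin 2 → ℂ) (i t))
        + Complex.exp (Complex.I * (π / 4)) *
          ∏ t ∈ Finset.univ.filter (fun t : Fin n => (t : ℕ) < n / 2), (![0, 1] : Fin 2 → ℂ) (i t)) *
      ((∏ t ∈ Finset.univ.filter (fun t : Fin n => ¬ (t : ℕ) < n / 2), (![1, 0] : Fin 2 → ℂ) (i t))
        + Complex.exp (-(Complex.I) * (π / 4)) *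
          ∏ t ∈ Finset.univ.filter (fun t : Fin n => ¬ (t : ℕ) < n / 2), (![0, 1] : Fin 2 → ℂ) (i t)))
    (W : Matrix (Fin n → Fin 2) (Fin n → Fin 2) ℂ)
    (hW : W = (1 / 2 : ℂ) • ((1 : Matrix (Fin n → Fin 2) (Fin n → Fin 2) ℂ)
        - ∑ l ∈ ({1, -1} : Finset ℝ),
            kronPow n ((1 / 2 : ℂ) • ((1 : Matrix (Fin 2) (Fin 2) ℂ) + l • σz))
        - (n : ℂ)⁻¹ • ∑ k ∈ Finset.Icc 1 n, ((-1 : ℂ)) ^ k • kronFam n (N k))) :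
    star ψ ⬝ᵥ W.mulVec ψ = ((-(1 / 4) * sin (n * ε) : ℝ) : ℂ) ∧
    (0 < ε → (-(1 / 4) * sin (n * ε) : ℝ) < 0) :=
  stmt14_general n hn heven ε hε₁ δ hδ N hN ψ hψ W hW
end

section
/- Let ε ∈ [0, arccos√(2/3)], let τ be a 2×2 positive semidefinite complex matrix of trace 1 with Bloch vector t ∈ ℝ³ (i.e. τ = (𝟙 + t·σ⃗)/2, ‖t‖ ≤ 1), and let n̂₁, n̂₂, n̂₃ ∈ ℝ³ be unit vectors with n̂ₖ·eₖ ≥ cos ε for the standard basis vectors eₖ. Set cₖ = n̂ₖ·t and suppose ‖c‖ ≤ 1, so that ρ = (𝟙 + c·σ⃗)/2 is a density matrix. Then ( tr √(√τ · ρ · √τ) )² ≥ (1 + cos ε − √2·sin ε)/2. -/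
open Matrix
open scoped ComplexOrder

/-- The old Mathlib `Matrix.PosSemidef.sqrt` (removed), with its original definition. -/
noncomputable def Matrix.PosSemidef.sqrt {n 𝕜 : Type*} [Fintype n] [RCLike 𝕜] [DecidableEq n]
    {A : Matrix n n 𝕜} (hA : A.PosSemidef) : Matrix n n 𝕜 :=
  hA.1.eigenvectorUnitary.1 * diagonal ((↑) ∘ (√·) ∘ hA.1.eigenvalues) *
    (star hA.1.eigenvectorUnitary : Matrix n n 𝕜)

/-!
For a qubit, `(tr √M)² = tr M + 2 √(det M)`; applied to `M = √τ ρ √τ` this turns the fidelity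
into `(1 + t·c + √((1 - |t|²)(1 - |c|²))) / 2`, so the claim is a scalar inequality with
`K = cos ε - √2 sin ε`, which is nonnegative exactly because `ε ≤ arccos √(2/3)`.

Writing `c_k = n_kk t_k + (off-diagonal part)`, Cauchy–Schwarz gives
`|c_k - n_kk t_k| ≤ sin ε · √(|t|² - t_k²)` with `n_kk ∈ [cos ε, 1]`. Summing over the three axes,
with `∑ |t_k| √(|t|² - t_k²) ≤ √2 |t|²`, yields both `t·c ≥ K |t|²` and an upper bound on `|c|²`
that is affine in `t·c`; together with `(t·c)² ≤ |t|² |c|²` these force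
`t·c + √((1 - |t|²)(1 - |c|²)) ≥ K`.
-/

open Real

namespace Matrix

open scoped MatrixOrder

lemma trace_sq_fin_two {R : Type*} [CommRing R] (A : Matrix (Fin 2) (Fin 2) R) :
    A.trace ^ 2 = (A * A).trace + 2 * A.det := by
  simp only [trace_fin_two, det_fin_two, mul_apply, Fin.sum_univ_two]
  ring

namespace PosSemidef

variable {n 𝕜 : Type*} [Fintype n] [RCLike 𝕜] [DecidableEq n] {A : Matrix n n 𝕜}

lemma sqrt_eq_cfc_sqrt (hA : A.PosSemidef) : hA.sqrt = CFC.sqrt A := by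
  rw [CFC.sqrt_eq_real_sqrt A hA.nonneg, cfcₙ_eq_cfc, hA.1.cfc_eq]
  rfl

lemma sqrt_mul_sqrt (hA : A.PosSemidef) : hA.sqrt * hA.sqrt = A := by
  rw [hA.sqrt_eq_cfc_sqrt, CFC.sqrt_mul_sqrt_self A hA.nonneg]

lemma trace_sqrt_mul_mul_sqrt (hA : A.PosSemidef) (B : Matrix n n 𝕜) :
    (hA.sqrt * B * hA.sqrt).trace = (A * B).trace := by
  rw [trace_mul_cycle, hA.sqrt_mul_sqrt]

lemma det_sqrt_mul_mul_sqrt (hA : A.PosSemidef) (B : Matrix n n 𝕜) :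
    (hA.sqrt * B * hA.sqrt).det = A.det * B.det := by
  rw [det_mul, det_mul, mul_right_comm, ← det_mul, hA.sqrt_mul_sqrt]

lemma re_trace_sqrt_sq_fin_two {M : Matrix (Fin 2) (Fin 2) 𝕜} (hM : M.PosSemidef) :
    RCLike.re (hM.sqrt.trace ^ 2) = RCLike.re M.trace + 2 * √(RCLike.re M.det) := by
  rw [trace_sq_fin_two, hM.sqrt_mul_sqrt, hM.sqrt_eq_cfc_sqrt, hM.det_sqrt,
    RCLike.sqrt_of_nonneg hM.det_nonneg]
  simp

end PosSemidef

end Matrix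

open Complex in
lemma one_add_pvec (v : Fin 3 → ℝ) :
    1 + pvec v = !![1 + (v 2 : ℂ), v 0 - v 1 * I; v 0 + v 1 * I, 1 - v 2] := by
  ext i j
  fin_cases i <;> fin_cases j <;> simp [pvec, σx, σy, σz, sub_eq_add_neg]

lemma trace_bloch_mul_bloch (t c : Fin 3 → ℝ) :
    ((1 / 2 : ℂ) • (1 + pvec t) * ((1 / 2 : ℂ) • (1 + pvec c))).trace =
      (((1 + t ⬝ᵥ c) / 2 : ℝ) : ℂ) := by
  rw [smul_mul_smul_comm, trace_smul, one_add_pvec, one_add_pvec, mul_fin_two, trace_fin_two_of,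
    dotProduct, Fin.sum_univ_three]
  push_cast
  linear_combination (-(t 1 * c 1) / 2 : ℂ) * Complex.I_sq

lemma det_bloch (v : Fin 3 → ℝ) :
    ((1 / 2 : ℂ) • (1 + pvec v)).det = (((1 - ∑ i, v i ^ 2) / 4 : ℝ) : ℂ) := by
  rw [det_smul, one_add_pvec, det_fin_two_of, Fin.sum_univ_three, Fintype.card_fin]
  push_cast
  linear_combination (v 1 ^ 2 / 4 : ℂ) * Complex.I_sq

theorem re_trace_sqrt_sq_eq_of_bloch {t c : Fin 3 → ℝ} {τ ρ : Matrix (Fin 2) (Fin 2) ℂ}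
    (hτ : τ = (1 / 2 : ℂ) • (1 + pvec t)) (hρ : ρ = (1 / 2 : ℂ) • (1 + pvec c))
    (hτp : τ.PosSemidef) (hmid : (hτp.sqrt * ρ * hτp.sqrt).PosSemidef) :
    ((hmid.sqrt.trace) ^ 2).re = (1 + t ⬝ᵥ c + √((1 - ∑ i, t i ^ 2) * (1 - ∑ i, c i ^ 2))) / 2 := by
  rw [← RCLike.re_to_complex, hmid.re_trace_sqrt_sq_fin_two, hτp.trace_sqrt_mul_mul_sqrt,
    hτp.det_sqrt_mul_mul_sqrt, hτ, hρ, trace_bloch_mul_bloch, det_bloch, det_bloch,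
    ← Complex.ofReal_mul, RCLike.re_to_complex, Complex.ofReal_re, RCLike.re_to_complex,
    Complex.ofReal_re, show ∀ a b : ℝ, a / 4 * (b / 4) = a * b / 4 ^ 2 by intros; ring,
    sqrt_div' _ (by positivity), sqrt_sq (by norm_num)]
  ring

lemma sqrt_two_mul_sin_le_cos {ε : ℝ} (hε : ε ∈ Set.Icc 0 (arccos √(2 / 3))) :
    0 ≤ sin ε ∧ √2 * sin ε ≤ cos ε := by
  obtain ⟨hε0, hε1⟩ := hε
  have hcos : √(2 / 3) ≤ cos ε := by
    have := cos_le_cos_of_nonneg_of_le_pi hε0 (arccos_le_pi _) hε1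
    rwa [cos_arccos (by linarith [sqrt_nonneg (2 / 3)]) (sqrt_le_one.mpr (by norm_num))] at this
  have hcos_sq : 2 / 3 ≤ cos ε ^ 2 := by
    have := pow_le_pow_left₀ (sqrt_nonneg _) hcos 2
    rwa [sq_sqrt (by norm_num)] at this
  have hsin : 0 ≤ sin ε := sin_nonneg_of_nonneg_of_le_pi hε0 (hε1.trans (arccos_le_pi _))
  refine ⟨hsin, (pow_le_pow_iff_left₀ (by positivity) ((sqrt_nonneg _).trans hcos)
    two_ne_zero).mp ?_⟩
  nlinarith [sin_sq_add_cos_sq ε, sq_sqrt (show (0 : ℝ) ≤ 2 by norm_num)]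

lemma bounds_of_abs_sub_mul_le {C S x c m g : ℝ} (hCm : C ≤ m) (hm : m ≤ 1)
    (h : |c - m * x| ≤ S * g) :
    C * x ^ 2 - S * (|x| * g) ≤ x * c ∧
      c ^ 2 ≤ (1 + C) * (x * c) - C * x ^ 2 + (1 - C) * (S * (|x| * g)) + S ^ 2 * g ^ 2 := by
  wlog hx : 0 ≤ x generalizing x c
  · have := this (x := -x) (c := -c)
      (by rwa [show -c - m * -x = -(c - m * x) by ring, abs_neg]) (by linarith)
    simpa using this
  rw [abs_of_nonneg hx]
  obtain ⟨hlo, hhi⟩ := abs_le.mp h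
  have hlo' : C * x - S * g ≤ c := by nlinarith [mul_le_mul_of_nonneg_right hCm hx]
  have hhi' : c ≤ x + S * g := by nlinarith [mul_le_mul_of_nonneg_right hm hx]
  constructor
  · nlinarith [mul_le_mul_of_nonneg_left hlo' hx]
  · nlinarith [mul_nonneg (sub_nonneg.2 hhi') (sub_nonneg.2 hlo')]

lemma sq_dotProduct_sub_mul_le {ι : Type*} [Fintype ι] [DecidableEq ι] (n t : ι → ℝ) (k : ι) :
    (n ⬝ᵥ t - n k * t k) ^ 2 ≤ (∑ i, n i ^ 2 - n k ^ 2) * (∑ i, t i ^ 2 - t k ^ 2) := by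
  have hk := Finset.mem_univ k
  rw [dotProduct, ← Finset.sum_erase_eq_sub hk, ← Finset.sum_erase_eq_sub hk,
    ← Finset.sum_erase_eq_sub hk]
  exact Finset.sum_mul_sq_le_sq_mul_sq _ n t

lemma sum_abs_mul_sqrt_sum_sub_sq_le {ι : Type*} [Fintype ι] (t : ι → ℝ) :
    ∑ k, |t k| * √(∑ i, t i ^ 2 - t k ^ 2) ≤ √(Fintype.card ι - 1) * ∑ i, t i ^ 2 := by
  set s := ∑ i, t i ^ 2
  have hs : 0 ≤ s := by positivity
  have hsub : ∀ k, 0 ≤ s - t k ^ 2 := fun k =>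
    sub_nonneg.2 (Finset.single_le_sum (fun i _ => sq_nonneg (t i)) (Finset.mem_univ k))
  calc _ ≤ √(∑ k, |t k| ^ 2) * √(∑ k, √(s - t k ^ 2) ^ 2) := sum_mul_le_sqrt_mul_sqrt _ _ _
    _ = √s * √((Fintype.card ι - 1) * s) := by
        have : ∑ k, (s - t k ^ 2) = (Fintype.card ι - 1) * s := by
          simp only [Finset.sum_sub_distrib, Finset.sum_const, Finset.card_univ, nsmul_eq_mul]
          ring
        simp only [sq_abs, fun k => sq_sqrt (hsub k), this]
        rfl
    _ = _ := by
        rw [sqrt_mul' _ hs, mul_left_comm, mul_self_sqrt hs]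

lemma le_add_sqrt_of_le_of_sq_le {K C s q P : ℝ} (hK : 0 ≤ K) (hKC : K ≤ C) (hC : C ≤ 1)
    (hs0 : 0 ≤ s) (hs1 : s ≤ 1) (hq1 : q ≤ 1) (hP : K * s ≤ P) (hPq : P ^ 2 ≤ s * q)
    (hq : q ≤ (1 + C) * P + (K ^ 2 - (1 + C) * K) * s) :
    K ≤ P + √((1 - s) * (1 - q)) := by
  rcases le_or_gt K P with hKP | hPK
  · linarith [sqrt_nonneg ((1 - s) * (1 - q))]
  suffices (K - P) ^ 2 ≤ (1 - s) * (1 - q) by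
    linarith [(le_sqrt (by linarith) (mul_nonneg (by linarith) (by linarith))).mpr this]
  set δ := P - K * s
  set β := 1 + C - 2 * K
  have hδ : 0 ≤ δ := by linarith
  have hδK : δ ≤ K * (1 - s) := by linarith
  have hβ : 0 ≤ β := by linarith
  have hδsq : δ ^ 2 ≤ s * β * δ := by nlinarith [mul_le_mul_of_nonneg_left hq hs0]
  have key : δ * β * (1 - s) + δ ^ 2 ≤ (1 - s) * (1 - K ^ 2) :=
    calc δ * β * (1 - s) + δ ^ 2 ≤ δ * β := by nlinarith
      _ ≤ K * (1 - s) * β := mul_le_mul_of_nonneg_right hδK hβ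
      _ ≤ (1 - s) * (1 - K ^ 2) := by
        have hKβ : K * β ≤ 1 - K ^ 2 := by
          nlinarith [sq_nonneg (1 - K), mul_nonneg hK (sub_nonneg.2 hC)]
        nlinarith [mul_le_mul_of_nonneg_left hKβ (sub_nonneg.2 hs1)]
  calc (K - P) ^ 2 = (1 - s) * (1 - ((1 + C) * P + (K ^ 2 - (1 + C) * K) * s))
        + (δ * β * (1 - s) + δ ^ 2 - (1 - s) * (1 - K ^ 2)) := by ring
    _ ≤ (1 - s) * (1 - q) := by nlinarith [mul_le_mul_of_nonneg_left hq (sub_nonneg.2 hs1)]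

theorem cos_sub_sqrt_two_mul_sin_le_dotProduct_add_sqrt {ε : ℝ}
    (hε : ε ∈ Set.Icc 0 (arccos √(2 / 3))) {t c : Fin 3 → ℝ} (nh : Fin 3 → Fin 3 → ℝ)
    (ht : ∑ i, t i ^ 2 ≤ 1) (hc : ∑ i, c i ^ 2 ≤ 1) (hunit : ∀ k, ∑ i, nh k i ^ 2 = 1)
    (hclose : ∀ k, cos ε ≤ nh k k) (hcdef : ∀ k, c k = nh k ⬝ᵥ t) :
    cos ε - √2 * sin ε ≤ t ⬝ᵥ c + √((1 - ∑ i, t i ^ 2) * (1 - ∑ i, c i ^ 2)) := by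
  obtain ⟨hS, hSC⟩ := sqrt_two_mul_sin_le_cos hε
  have hC : 0 ≤ cos ε := (mul_nonneg (sqrt_nonneg 2) hS).trans hSC
  set C := cos ε
  set S := sin ε
  set s := ∑ i, t i ^ 2 with hs
  set g : Fin 3 → ℝ := fun k => √(s - t k ^ 2)
  have hsub : ∀ k, 0 ≤ s - t k ^ 2 := fun k =>
    sub_nonneg.2 (Finset.single_le_sum (fun i _ => sq_nonneg (t i)) (Finset.mem_univ k))
  have hdiag : ∀ k, nh k k ^ 2 ≤ 1 := fun k =>
    hunit k ▸ Finset.single_le_sum (fun i _ => sq_nonneg (nh k i)) (Finset.mem_univ k)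
  have hdev : ∀ k, |c k - nh k k * t k| ≤ S * g k := by
    intro k
    have hoff : 1 - nh k k ^ 2 ≤ S ^ 2 := by
      nlinarith [sin_sq_add_cos_sq ε, hclose k]
    refine abs_le_of_sq_le_sq ?_ (mul_nonneg hS (sqrt_nonneg _))
    calc (c k - nh k k * t k) ^ 2 ≤ (1 - nh k k ^ 2) * (s - t k ^ 2) := by
          simpa only [hcdef k, hunit k] using sq_dotProduct_sub_mul_le (nh k) t k
      _ ≤ S ^ 2 * (s - t k ^ 2) := mul_le_mul_of_nonneg_right hoff (hsub k)
      _ = (S * g k) ^ 2 := by rw [mul_pow, sq_sqrt (hsub k)]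
  have hbounds := fun k => bounds_of_abs_sub_mul_le (hclose k)
    (le_of_abs_le ((sq_le_one_iff_abs_le_one _).mp (hdiag k))) (hdev k)
  set X := ∑ k, |t k| * g k with hX
  have hcross : X ≤ √2 * s := by
    simpa [show (3 : ℝ) - 1 = 2 by norm_num] using sum_abs_mul_sqrt_sum_sub_sq_le t
  have hgsq : ∑ k, g k ^ 2 = 2 * s := by
    simp only [g, fun k => sq_sqrt (hsub k), Finset.sum_sub_distrib, Finset.sum_const,
      Finset.card_univ, Fintype.card_fin, nsmul_eq_mul]
    ring
  have hdot : ∑ i, t i * c i = t ⬝ᵥ c := rfl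
  have hP : (C - √2 * S) * s ≤ t ⬝ᵥ c := by
    have := Finset.sum_le_sum fun k (_ : k ∈ Finset.univ) => (hbounds k).1
    simp only [Finset.sum_sub_distrib, ← Finset.mul_sum, ← hs, hdot] at this
    nlinarith [mul_le_mul_of_nonneg_left hcross hS]
  have hq : ∑ i, c i ^ 2 ≤
      (1 + C) * t ⬝ᵥ c + ((C - √2 * S) ^ 2 - (1 + C) * (C - √2 * S)) * s := by
    have := Finset.sum_le_sum fun k (_ : k ∈ Finset.univ) => (hbounds k).2
    simp only [Finset.sum_add_distrib, Finset.sum_sub_distrib, ← Finset.mul_sum, hgsq, ← hs, ← hX,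
      hdot] at this
    have hK : (C - √2 * S) ^ 2 - (1 + C) * (C - √2 * S) =
        -C + (1 - C) * (√2 * S) + 2 * S ^ 2 := by
      linear_combination S ^ 2 * sq_sqrt (show (0 : ℝ) ≤ 2 by norm_num)
    rw [hK]
    nlinarith [mul_le_mul_of_nonneg_left hcross (mul_nonneg (sub_nonneg.2 (cos_le_one ε)) hS)]
  exact le_add_sqrt_of_le_of_sq_le (by linarith) (by linarith [mul_nonneg (sqrt_nonneg 2) hS])
    (cos_le_one ε) (by positivity) ht hc hP (Finset.sum_mul_sq_le_sq_mul_sq _ _ _) hq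

/-- for misalignment ε ∈ [0, arccos √(2/3)], actual unit measurement
directions n̂ₖ with n̂ₖ·eₖ ≥ cos ε, a qubit state τ with Bloch vector t, and the
linear-inversion reconstruction ρ from the exact data cₖ = n̂ₖ·t (assumed physical,
‖c‖ ≤ 1), the Uhlmann–Jozsa fidelity (tr √(√τ ρ √τ))² is at least
f(ε) = (1 + cos ε − √2 sin ε)/2. -/
theorem stmt18 (ε : ℝ) (hε : ε ∈ Set.Icc 0 (Real.arccos (Real.sqrt (2 / 3))))
    (t : Fin 3 → ℝ) (ht : ∑ i, (t i) ^ 2 ≤ 1)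
    (nh : Fin 3 → Fin 3 → ℝ)
    (hunit : ∀ k, ∑ i, (nh k i) ^ 2 = 1)
    (hclose : ∀ k, nh k ⬝ᵥ Pi.single k 1 ≥ Real.cos ε)
    (c : Fin 3 → ℝ) (hcdef : ∀ k, c k = nh k ⬝ᵥ t) (hc : ∑ i, (c i) ^ 2 ≤ 1)
    (τ ρ : Matrix (Fin 2) (Fin 2) ℂ)
    (hτ : τ = (1 / 2 : ℂ) • ((1 : Matrix (Fin 2) (Fin 2) ℂ) + pvec t))
    (hρ : ρ = (1 / 2 : ℂ) • ((1 : Matrix (Fin 2) (Fin 2) ℂ) + pvec c))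
    (hτp : τ.PosSemidef)
    (hmid : (hτp.sqrt * ρ * hτp.sqrt).PosSemidef) :
    ((hmid.sqrt.trace) ^ 2).re ≥ (1 + Real.cos ε - Real.sqrt 2 * Real.sin ε) / 2 := by
  have hdiag : ∀ k, cos ε ≤ nh k k := fun k => by simpa only [dotProduct_single_one] using hclose k
  have hscalar := cos_sub_sqrt_two_mul_sin_le_dotProduct_add_sqrt hε nh ht hc hunit hdiag hcdef
  rw [re_trace_sqrt_sq_eq_of_bloch hτ hρ hτp hmid]
  linarith
end
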